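/- arXiv:1703.04156 — 3 statements merged into one kernel-verified Lean document; each statement's English description precedes it below -/
import Mathlib

section
/- Let X be an integrable real-valued random variable on a probability space (Ω, 𝓕, P) and β ∈ (0,1), and set q := VaR_β(X) = inf{α ∈ ℝ : P(X ≤ α) ≥ β}. Then q is a global minimizer of the Rockafellar–Uryasev function: for every γ ∈ ℝ, q + (1 − β)⁻¹ · E[(X − q)⁺] ≤ γ + (1 − β)⁻¹ · E[(X − γ)⁺]. -/
/-!
The Value at Risk `q` is a `β`-quantile: `P(X < q) ≤ β ≤ P(X ≤ q)`. Pointwise,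
`(x - γ)⁺ - (x - q)⁺ ≥ (q - γ) 𝟙{x ∈ s}` both for `s = {x > q}` and for `s = {x ≥ q}`.
Taking expectations with `s = {x ≥ q}` when `γ ≤ q` and `s = {x > q}` when `q ≤ γ` gives
`E[(X - γ)⁺] - E[(X - q)⁺] ≥ (q - γ)(1 - β)`, which after division by `1 - β` is the claim.
-/

open MeasureTheory ProbabilityTheory Filter Set Topology

lemma StieltjesFunction.le_apply_csInf_setOf_le (f : StieltjesFunction ℝ) {β : ℝ}
    (hne : {α | β ≤ f α}.Nonempty) : β ≤ f (sInf {α | β ≤ f α}) := by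
  refine ge_of_tendsto ((f.right_continuous _).tendsto.mono_left
    (nhdsWithin_mono _ Ioi_subset_Ici_self)) (eventually_nhdsWithin_of_forall fun x hx => ?_)
  obtain ⟨a, ha, hax⟩ := exists_lt_of_csInf_lt hne hx
  exact ha.trans (f.mono hax.le)

lemma Monotone.leftLim_csInf_setOf_le {f : ℝ → ℝ} (hf : Monotone f) {β : ℝ}
    (hbdd : BddBelow {α | β ≤ f α}) : Function.leftLim f (sInf {α | β ≤ f α}) ≤ β :=
  _root_.le_of_tendsto (hf.tendsto_leftLim _) (eventually_nhdsWithin_of_forall fun x hx =>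
    (not_le.mp (show ¬β ≤ f x from notMem_of_lt_csInf (s := {α | β ≤ f α}) hx hbdd)).le)

section Quantile

variable (ν : Measure ℝ) [IsProbabilityMeasure ν] {β : ℝ}

lemma le_measureReal_Iic_sInf_cdf (hβ : β < 1) :
    β ≤ ν.real (Iic (sInf {α | β ≤ cdf ν α})) := by
  have hne : {α | β ≤ cdf ν α}.Nonempty :=
    ((tendsto_cdf_atTop ν).eventually (eventually_ge_nhds hβ)).exists
  simpa only [cdf_eq_real] using (cdf ν).le_apply_csInf_setOf_le hne

lemma measureReal_Iio_sInf_cdf_le (hβ : 0 < β) :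
    ν.real (Iio (sInf {α | β ≤ cdf ν α})) ≤ β := by
  have hbdd : BddBelow {α | β ≤ cdf ν α} := by
    obtain ⟨a, ha⟩ :=
      eventually_atBot.mp ((tendsto_cdf_atBot ν).eventually (eventually_lt_nhds hβ))
    exact ⟨a, fun x hx => le_of_not_gt fun hxa => (ha x hxa.le).not_ge hx⟩
  have hIio := (cdf ν).measure_Iio (tendsto_cdf_atBot ν) (sInf {α | β ≤ cdf ν α})
  rw [measure_cdf, sub_zero] at hIio
  refine ENNReal.toReal_le_of_le_ofReal hβ.le (hIio ▸ ?_)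
  exact ENNReal.ofReal_le_ofReal ((monotone_cdf ν).leftLim_csInf_setOf_le hbdd)

end Quantile

noncomputable def rockafellarUryasev (ν : Measure ℝ) (β γ : ℝ) : ℝ :=
  γ + (1 - β)⁻¹ * ∫ x, max (x - γ) 0 ∂ν

lemma integrable_max_sub_const {ν : Measure ℝ} [IsFiniteMeasure ν] (hν : Integrable id ν)
    (γ : ℝ) : Integrable (fun x => max (x - γ) 0) ν :=
  (hν.sub (integrable_const γ)).pos_part

lemma mul_measureReal_le_integral_max_sub_sub {ν : Measure ℝ} [IsFiniteMeasure ν]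
    (hν : Integrable id ν) {q γ : ℝ} {s : Set ℝ} (hs : MeasurableSet s)
    (hmem : ∀ x ∈ s, q ≤ x) (hnotMem : ∀ x ∉ s, x ≤ q) :
    (q - γ) * ν.real s ≤ (∫ x, max (x - γ) 0 ∂ν) - ∫ x, max (x - q) 0 ∂ν := by
  have hpointwise : ∀ x, s.indicator (fun _ => q - γ) x ≤ max (x - γ) 0 - max (x - q) 0 := by
    intro x
    by_cases hx : x ∈ s
    · rw [indicator_of_mem hx, max_eq_left (sub_nonneg.mpr (hmem x hx))]
      linarith [le_max_left (x - γ) 0]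
    · rw [indicator_of_notMem hx, max_eq_right (sub_nonpos.mpr (hnotMem x hx))]
      linarith [le_max_right (x - γ) 0]
  calc (q - γ) * ν.real s = ∫ x, s.indicator (fun _ => q - γ) x ∂ν := by
        rw [integral_indicator_const _ hs, smul_eq_mul, mul_comm]
    _ ≤ ∫ x, (max (x - γ) 0 - max (x - q) 0) ∂ν :=
        integral_mono ((integrable_const (q - γ)).indicator hs)
          ((integrable_max_sub_const hν γ).sub (integrable_max_sub_const hν q)) hpointwise
    _ = _ := integral_sub (integrable_max_sub_const hν γ) (integrable_max_sub_const hν q)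

theorem rockafellarUryasev_le_of_measureReal_Iio_le_le_measureReal_Iic (ν : Measure ℝ)
    [IsProbabilityMeasure ν] (hν : Integrable id ν) {β q : ℝ} (hβ : β < 1)
    (hIio : ν.real (Iio q) ≤ β) (hIic : β ≤ ν.real (Iic q)) (γ : ℝ) :
    rockafellarUryasev ν β q ≤ rockafellarUryasev ν β γ := by
  have hIoi : ν.real (Ioi q) ≤ 1 - β := by
    rw [← compl_Iic, measureReal_compl measurableSet_Iic, probReal_univ]
    linarith
  have hIci : 1 - β ≤ ν.real (Ici q) := by
    rw [← compl_Iio, measureReal_compl measurableSet_Iio, probReal_univ]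
    linarith
  set Δ := (∫ x, max (x - γ) 0 ∂ν) - ∫ x, max (x - q) 0 ∂ν with hΔ
  have key : (q - γ) * (1 - β) ≤ Δ := by
    rcases le_total γ q with hγq | hqγ
    · calc (q - γ) * (1 - β) ≤ (q - γ) * ν.real (Ici q) :=
            mul_le_mul_of_nonneg_left hIci (sub_nonneg.mpr hγq)
        _ ≤ _ := mul_measureReal_le_integral_max_sub_sub hν measurableSet_Ici
            (fun _ hx => hx) (fun _ hx => (not_le.mp hx).le)
    · calc (q - γ) * (1 - β) ≤ (q - γ) * ν.real (Ioi q) :=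
            mul_le_mul_of_nonpos_left hIoi (sub_nonpos.mpr hqγ)
        _ ≤ _ := mul_measureReal_le_integral_max_sub_sub hν measurableSet_Ioi
            (fun _ hx => le_of_lt hx) (fun _ hx => not_lt.mp hx)
  have hscaled : q - γ ≤ (1 - β)⁻¹ * Δ := by
    calc q - γ = (1 - β)⁻¹ * ((q - γ) * (1 - β)) := by field_simp [(sub_pos.mpr hβ).ne']
      _ ≤ _ := by gcongr
  unfold rockafellarUryasev
  rw [hΔ, mul_sub] at hscaled
  linarith

/-- The Value at Risk `q = VaR_β(X) = inf {α : P(X ≤ α) ≥ β}` is a global minimizer of the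
Rockafellar–Uryasev function `γ ↦ γ + (1 − β)⁻¹ · E[(X − γ)⁺]`. -/
theorem VaR_minimizes_rockafellarUryasev
    {Ω : Type*} [MeasureSpace Ω] [IsProbabilityMeasure (volume : Measure Ω)]
    (X : Ω → ℝ) (hX : Integrable X)
    (β : ℝ) (hβ : β ∈ Set.Ioo (0 : ℝ) 1)
    (q : ℝ) (hq : q = sInf {α : ℝ | (volume {ω | X ω ≤ α}).toReal ≥ β}) :
    ∀ γ : ℝ,
      q + (1 - β)⁻¹ * ∫ ω, max (X ω - q) 0 ≤
        γ + (1 - β)⁻¹ * ∫ ω, max (X ω - γ) 0 := by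
  intro γ
  set ν : Measure ℝ := volume.map X
  have hXm : AEMeasurable X := hX.aemeasurable
  have : IsProbabilityMeasure ν := Measure.isProbabilityMeasure_map hXm
  have hcdf : ∀ α, (volume {ω | X ω ≤ α}).toReal = cdf ν α := fun α => by
    rw [cdf_eq_real, measureReal_def, Measure.map_apply_of_aemeasurable hXm measurableSet_Iic]
    rfl
  have hintegral : ∀ γ, ∫ ω, max (X ω - γ) 0 = ∫ x, max (x - γ) 0 ∂ν := fun γ =>
    (integral_map hXm
      (by fun_prop : Continuous fun x : ℝ => max (x - γ) 0).aestronglyMeasurable).symm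
  have hν : Integrable id ν := (integrable_map_measure aestronglyMeasurable_id hXm).mpr hX
  simp only [hcdf, ge_iff_le] at hq
  rw [hintegral, hintegral]
  exact rockafellarUryasev_le_of_measureReal_Iio_le_le_measureReal_Iic ν hν hβ.2
    (hq ▸ measureReal_Iio_sInf_cdf_le ν hβ.1) (hq ▸ le_measureReal_Iic_sInf_cdf ν hβ.2) γ
end

section
/- Let X be an integrable real-valued random variable on a probability space (Ω, 𝓕, P) whose cumulative distribution function F(α) = P(X ≤ α) is continuous, let β ∈ (0,1), and set q := VaR_β(X) = inf{α ∈ ℝ : P(X ≤ α) ≥ β}. Then the minimum value of the Rockafellar–Uryasev function equals the Conditional Value at Risk: q + (1 − β)⁻¹ · E[(X − q)⁺] = (1 − β)⁻¹ · E[X · 𝟙{X ≥ q}]. -/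
/-!
With `F` the distribution function of `X`, continuity of `F` forces `F q = β` at
`q = inf {F ≥ β}` and leaves no atom at `q`, so `P(X ≥ q) = 1 - β`. Splitting
`E[(X - q)⁺] = E[X 𝟙{X ≥ q}] - q P(X ≥ q)`, the term `q` cancels against
`-q (1 - β) / (1 - β)`.
-/

open MeasureTheory ProbabilityTheory Filter Topology Set

theorem Continuous.apply_csInf_setOf_le_eq {F : ℝ → ℝ} (hF : Continuous F) {β : ℝ}
    (hne : {α | β ≤ F α}.Nonempty) (hbdd : BddBelow {α | β ≤ F α}) :
    F (sInf {α | β ≤ F α}) = β := by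
  set q := sInf {α | β ≤ F α}
  have below : ∀ᶠ α in 𝓝[<] q, F α ≤ β := eventually_nhdsWithin_of_forall fun α hα =>
    (not_le.mp (notMem_of_lt_csInf (s := {α | β ≤ F α}) hα hbdd)).le
  exact le_antisymm (le_of_tendsto (hF.continuousAt.tendsto.mono_left nhdsWithin_le_nhds) below)
    ((isClosed_le continuous_const hF).csInf_mem hne hbdd)

namespace ProbabilityTheory

theorem cdf_csInf_setOf_le_eq {μ : Measure ℝ} (hμ : Continuous (cdf μ)) {β : ℝ}
    (hβ : β ∈ Ioo 0 1) : cdf μ (sInf {α | β ≤ cdf μ α}) = β := by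
  refine hμ.apply_csInf_setOf_le_eq ?_ ?_
  · exact ((tendsto_cdf_atTop μ).eventually (eventually_ge_nhds hβ.2)).exists
  · obtain ⟨a, ha⟩ := eventually_atBot.mp
      ((tendsto_cdf_atBot μ).eventually (eventually_lt_nhds hβ.1))
    exact ⟨a, fun α hα => le_of_not_ge fun hαa => (ha α hαa).not_ge hα⟩

theorem measureReal_Ici_eq_one_sub_cdf {μ : Measure ℝ} [IsProbabilityMeasure μ] {x : ℝ}
    (hx : ContinuousAt (cdf μ) x) : μ.real (Ici x) = 1 - cdf μ x := by
  have hIci := (cdf μ).measure_Ici (tendsto_cdf_atTop μ) x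
  rw [measure_cdf] at hIci
  rw [measureReal_def, hIci, hx.continuousWithinAt.leftLim_eq,
    ENNReal.toReal_ofReal (sub_nonneg.mpr (cdf_le_one μ x))]

theorem cdf_map_apply {Ω : Type*} [MeasurableSpace Ω] {μ : Measure Ω}
    [IsProbabilityMeasure μ] {X : Ω → ℝ} (hX : Measurable X) (α : ℝ) :
    cdf (μ.map X) α = μ.real {ω | X ω ≤ α} := by
  have := Measure.isProbabilityMeasure_map (μ := μ) hX.aemeasurable
  rw [cdf_eq_real, map_measureReal_apply hX measurableSet_Iic]
  rfl

end ProbabilityTheory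

theorem MeasureTheory.integral_max_sub_zero_eq {Ω : Type*} [MeasurableSpace Ω] {μ : Measure Ω}
    [IsFiniteMeasure μ] {X : Ω → ℝ} (hX : Integrable X μ) (hXm : Measurable X) (q : ℝ) :
    ∫ ω, max (X ω - q) 0 ∂μ =
      ∫ ω, {ω | q ≤ X ω}.indicator X ω ∂μ - q * μ.real {ω | q ≤ X ω} := by
  have hs : MeasurableSet {ω | q ≤ X ω} := hXm measurableSet_Ici
  have hmax : (fun ω => max (X ω - q) 0) = {ω | q ≤ X ω}.indicator fun ω => X ω - q := by
    ext ω
    by_cases h : q ≤ X ω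
    · simp [h]
    · simp [h, (not_le.mp h).le]
  rw [hmax, integral_indicator hs, integral_indicator hs,
    integral_sub hX.integrableOn (integrable_const q), setIntegral_const, smul_eq_mul, mul_comm]

/-- For a random variable with continuous CDF, the value of the Rockafellar–Uryasev function
at `q = VaR_β(X)` equals the Conditional Value at Risk:
`q + (1 − β)⁻¹ · E[(X − q)⁺] = (1 − β)⁻¹ · E[X · 𝟙{X ≥ q}]`. -/
theorem rockafellarUryasev_at_VaR_eq_CVaR
    {Ω : Type*} [MeasureSpace Ω] [IsProbabilityMeasure (volume : Measure Ω)]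
    (X : Ω → ℝ) (hX : Integrable X) (hXm : Measurable X)
    (hF : Continuous fun α : ℝ => (volume {ω | X ω ≤ α}).toReal)
    (β : ℝ) (hβ : β ∈ Set.Ioo (0 : ℝ) 1)
    (q : ℝ) (hq : q = sInf {α : ℝ | (volume {ω | X ω ≤ α}).toReal ≥ β}) :
    q + (1 - β)⁻¹ * ∫ ω, max (X ω - q) 0 =
      (1 - β)⁻¹ * ∫ ω, Set.indicator {ω' | X ω' ≥ q} X ω := by
  have hcdf (α : ℝ) : (volume {ω | X ω ≤ α}).toReal = cdf (volume.map X) α :=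
    (cdf_map_apply hXm α).symm
  simp_rw [hcdf, ge_iff_le] at hF hq
  have hFq : cdf (volume.map X) q = β := hq ▸ cdf_csInf_setOf_le_eq hF hβ
  have htail : volume.real {ω | q ≤ X ω} = 1 - β := by
    have := Measure.isProbabilityMeasure_map (μ := (volume : Measure Ω)) hXm.aemeasurable
    change volume.real (X ⁻¹' Ici q) = _
    rw [← map_measureReal_apply hXm measurableSet_Ici,
      measureReal_Ici_eq_one_sub_cdf hF.continuousAt, hFq]
  simp only [ge_iff_le]
  rw [integral_max_sub_zero_eq hX hXm, htail]
  have : 1 - β ≠ 0 := (sub_pos.mpr hβ.2).ne'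
  field_simp
  ring
end

section
/- Let X₁, …, X_N be independent, identically distributed real-valued random variables on a probability space (Ω, 𝓕, P) whose common cumulative distribution function F is continuous, let β ∈ (0,1) with F(q_β) = β where q_β := inf{α ∈ ℝ : F(α) ≥ β}, and let 1 ≤ l < u ≤ N be integers. Then the probability that the β-quantile q_β is bracketed by the l-th and u-th order statistics satisfies P( X_{(l)} ≤ q_β ≤ X_{(u)} ) ≥ Σ_{i=l}^{u−1} C(N, i) · β^i · (1 − β)^(N − i), where X_{(1)} ≤ ⋯ ≤ X_{(N)} denotes the sample sorted in increasing order; equivalently, the event on the left is the event that at least l of the samples satisfy X_i ≤ q_β and at most u − 1 of the samples satisfy X_i < q_β. -/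
/-!
The events `{X i ≤ q}` are independent, each of probability `F q = β`, so the number of samples
`≤ q` is binomially distributed with parameters `N` and `β`. Whenever that number lies in
`[l, u)` the quantile is bracketed, because the number of samples `< q` is no larger.
-/

open MeasureTheory ProbabilityTheory Finset

open Classical in
lemma setOf_filter_mem_eq_iInter {Ω ι α : Type*} [Fintype ι] (X : ι → Ω → α) (S : Set α)
    (s : Finset ι) :
    {ω | ({i | X i ω ∈ S} : Finset ι) = s} =
      ⋂ i, X i ⁻¹' (if i ∈ s then S else Sᶜ) := by
  ext ω
  simp only [Set.mem_ofPred_eq, Finset.ext_iff, mem_filter, Set.mem_iInter, Set.mem_preimage]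
  refine forall_congr' fun i => ?_
  split_ifs with hi <;> simp [hi]

open Classical in
lemma setOf_card_filter_mem_eq_biUnion {Ω ι α : Type*} [Fintype ι] (X : ι → Ω → α) (S : Set α)
    (k : ℕ) :
    {ω | #{i | X i ω ∈ S} = k} =
      ⋃ s ∈ powersetCard k (univ : Finset ι), {ω | ({i | X i ω ∈ S} : Finset ι) = s} := by
  ext ω
  simp

namespace ProbabilityTheory

variable {Ω ι α : Type*} [MeasurableSpace Ω] [MeasurableSpace α] {μ : Measure Ω} [Fintype ι]
  {X : ι → Ω → α} {S : Set α} {p : ℝ}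

lemma iIndepFun.measureReal_iInter_preimage_ite (hX : iIndepFun X μ)
    (hXm : ∀ i, Measurable (X i)) (hS : MeasurableSet S) (hp : ∀ i, μ.real (X i ⁻¹' S) = p)
    (s : Finset ι) [DecidablePred (· ∈ s)] :
    μ.real (⋂ i, X i ⁻¹' (if i ∈ s then S else Sᶜ)) =
      p ^ #s * (1 - p) ^ (Fintype.card ι - #s) := by
  have := hX.isProbabilityMeasure
  have hprod : μ (⋂ i, X i ⁻¹' (if i ∈ s then S else Sᶜ)) =
      ∏ i, μ (X i ⁻¹' (if i ∈ s then S else Sᶜ)) :=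
    hX.meas_iInter fun i => ⟨_, by split_ifs <;> [exact hS; exact hS.compl], rfl⟩
  have hfactor (i : ι) :
      μ.real (X i ⁻¹' (if i ∈ s then S else Sᶜ)) = if i ∈ s then p else 1 - p := by
    split_ifs
    · exact hp i
    · rw [Set.preimage_compl, measureReal_compl (hXm i hS), probReal_univ, hp]
  rw [measureReal_def, hprod, ENNReal.toReal_prod]
  simp_rw [← measureReal_def, hfactor]
  have hs : #{i | i ∈ s} = #s := by simp
  rw [prod_ite, prod_const, prod_const, ← hs, ← card_univ,
    ← card_filter_add_card_filter_not (s := univ) (· ∈ s), Nat.add_sub_cancel_left]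

open Classical in
lemma measurableSet_setOf_filter_mem_eq (hXm : ∀ i, Measurable (X i)) (hS : MeasurableSet S)
    (s : Finset ι) : MeasurableSet {ω | ({i | X i ω ∈ S} : Finset ι) = s} := by
  rw [setOf_filter_mem_eq_iInter]
  exact .iInter fun i => hXm i (by split_ifs <;> [exact hS; exact hS.compl])

open Classical in
lemma iIndepFun.measureReal_card_filter_mem_eq (hX : iIndepFun X μ)
    (hXm : ∀ i, Measurable (X i)) (hS : MeasurableSet S) (hp : ∀ i, μ.real (X i ⁻¹' S) = p)
    (k : ℕ) :
    μ.real {ω | #{i | X i ω ∈ S} = k} =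
      (Fintype.card ι).choose k * p ^ k * (1 - p) ^ (Fintype.card ι - k) := by
  have := hX.isProbabilityMeasure
  rw [setOf_card_filter_mem_eq_biUnion, measureReal_biUnion_finset
    (fun s _ t _ hst => Set.disjoint_left.2 fun ω hs ht => hst (hs.symm.trans ht))
    (fun s _ => measurableSet_setOf_filter_mem_eq hXm hS s)]
  have hpattern : ∀ s ∈ powersetCard k (univ : Finset ι),
      μ.real {ω | ({i | X i ω ∈ S} : Finset ι) = s} =
        p ^ k * (1 - p) ^ (Fintype.card ι - k) := by
    intro s hs
    rw [setOf_filter_mem_eq_iInter, hX.measureReal_iInter_preimage_ite hXm hS hp,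
      mem_powersetCard_univ.1 hs]
  rw [sum_congr rfl hpattern, sum_const, card_powersetCard, card_univ, nsmul_eq_mul, mul_assoc]

open Classical in
lemma iIndepFun.measureReal_card_filter_mem_mem (hX : iIndepFun X μ)
    (hXm : ∀ i, Measurable (X i)) (hS : MeasurableSet S) (hp : ∀ i, μ.real (X i ⁻¹' S) = p)
    (K : Finset ℕ) :
    μ.real {ω | #{i | X i ω ∈ S} ∈ K} =
      ∑ k ∈ K, (Fintype.card ι).choose k * p ^ k * (1 - p) ^ (Fintype.card ι - k) := by
  have hunion : {ω | #{i | X i ω ∈ S} ∈ K} = ⋃ k ∈ K, {ω | #{i | X i ω ∈ S} = k} := by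
    ext ω
    simp
  have := hX.isProbabilityMeasure
  rw [hunion, measureReal_biUnion_finset
    (fun j _ k _ hjk => Set.disjoint_left.2 fun ω hj hk => hjk (hj.symm.trans hk))
    (fun k _ => by
      rw [setOf_card_filter_mem_eq_biUnion]
      exact (powersetCard k univ).measurableSet_biUnion fun s _ =>
        measurableSet_setOf_filter_mem_eq hXm hS s)]
  exact sum_congr rfl fun k _ => hX.measureReal_card_filter_mem_eq hXm hS hp k

end ProbabilityTheory

theorem orderStatistics_bracket_quantile_general
    {Ω : Type*} [MeasureSpace Ω]
    {N : ℕ} (X : Fin N → Ω → ℝ) (hXm : ∀ i, Measurable (X i))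
    (hindep : iIndepFun (m := fun _ : Fin N => (inferInstance : MeasurableSpace ℝ)) X volume)
    (F : ℝ → ℝ) (hF : ∀ i α, (volume {ω | X i ω ≤ α}).toReal = F α)
    (β : ℝ) (q : ℝ) (hFq : F q = β)
    (l u : ℕ) :
    (volume {ω | l ≤ (Finset.univ.filter fun i : Fin N => X i ω ≤ q).card ∧
        (Finset.univ.filter fun i : Fin N => X i ω < q).card ≤ u - 1}).toReal ≥
      ∑ i ∈ Finset.Ico l u, (N.choose i : ℝ) * β ^ i * (1 - β) ^ (N - i) := by
  have := hindep.isProbabilityMeasure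
  have hp : ∀ i, volume.real (X i ⁻¹' Set.Iic q) = β := fun i => (hF i q).trans hFq
  have hbracket : {ω | #{i | X i ω ∈ Set.Iic q} ∈ Ico l u} ⊆
      {ω | l ≤ #{i | X i ω ≤ q} ∧ #{i | X i ω < q} ≤ u - 1} := by
    intro ω hω
    simp only [Set.mem_ofPred_eq, Set.mem_Iic, mem_Ico] at hω ⊢
    have hlt_le : #{i | X i ω < q} ≤ #{i | X i ω ≤ q} :=
      card_le_card (monotone_filter_right _ fun _ _ => le_of_lt)
    omega
  have hbinom := hindep.measureReal_card_filter_mem_mem hXm measurableSet_Iic hp (Ico l u)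
  rw [Fintype.card_fin] at hbinom
  rw [ge_iff_le, ← hbinom]
  exact measureReal_mono hbracket

/-- Order-statistic confidence bound for the `β`-quantile: for i.i.d. samples `X₁, …, X_N` with
common continuous CDF `F` and `F(q_β) = β`, where `q_β = inf {α : F α ≥ β}`, the probability
that `q_β` lies between the `l`-th and `u`-th order statistics (i.e. that at least `l` samples
satisfy `X i ≤ q_β` and at most `u − 1` samples satisfy `X i < q_β`) is at least
`Σ_{i=l}^{u−1} C(N,i) β^i (1−β)^(N−i)`. -/
theorem orderStatistics_bracket_quantile
    {Ω : Type*} [MeasureSpace Ω] [IsProbabilityMeasure (volume : Measure Ω)]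
    {N : ℕ} (X : Fin N → Ω → ℝ) (hXm : ∀ i, Measurable (X i))
    (hindep : iIndepFun (m := fun _ : Fin N => (inferInstance : MeasurableSpace ℝ)) X volume)
    (F : ℝ → ℝ) (hF : ∀ i α, (volume {ω | X i ω ≤ α}).toReal = F α)
    (hFcont : Continuous F)
    (β : ℝ) (hβ : β ∈ Set.Ioo (0 : ℝ) 1)
    (q : ℝ) (hq : q = sInf {α : ℝ | F α ≥ β}) (hFq : F q = β)
    (l u : ℕ) (hl : 1 ≤ l) (hlu : l < u) (hu : u ≤ N) :
    (volume {ω | l ≤ (Finset.univ.filter fun i : Fin N => X i ω ≤ q).card ∧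
        (Finset.univ.filter fun i : Fin N => X i ω < q).card ≤ u - 1}).toReal ≥
      ∑ i ∈ Finset.Ico l u, (N.choose i : ℝ) * β ^ i * (1 - β) ^ (N - i) :=
  orderStatistics_bracket_quantile_general X hXm hindep F hF β q hFq l u
end
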